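/- arXiv:0712.3274 — 7 statements merged into one kernel-verified Lean document; each statement's English description precedes it below -/
import Mathlib

section
/- The set E of matrices A = (a_ij) ∈ M₂(k) satisfying (*) is a k-subalgebra of the matrix algebra M₂(k), and the map sending a + bx ∈ k(x) (with a, b ∈ k) to the matrix with rows (a, b·c₀) and (b, a + b·c₁) is a k-algebra isomorphism from k(x) onto E. In particular, the endomorphism ring of the representation S_x is isomorphic to the field k(x). -/
/-!
Both `x` and the companion matrix `M = !![0, c₀; 1, c₁]` are roots of `X² - c₁X - c₀` lying
outside `k`, so this quadratic is the minimal polynomial of each, and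
`k[x] ≅ k[X] ⧸ (X² - c₁X - c₀) ≅ k[M]` with `x ↦ M`; thus `a + bx ↦ a + bM`. The algebra `k[M]`
consists of the matrices `a + bM`, and these are exactly the solutions of (*): since
`(a + bx) x = bc₀ + (a + bc₁) x` and `1, x` are linearly independent over `k`, condition (*)
says `a₁₂ = a₂₁c₀` and `a₂₂ = a₁₁ + a₂₁c₁`.
-/

open Polynomial

section QuadraticPolynomial

variable {R : Type*} [CommRing R]

theorem monic_X_sq_sub_C_mul_X_sub_C (c₀ c₁ : R) : (X ^ 2 - C c₁ * X - C c₀).Monic := by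
  monicity!

theorem natDegree_X_sq_sub_C_mul_X_sub_C [Nontrivial R] (c₀ c₁ : R) :
    (X ^ 2 - C c₁ * X - C c₀).natDegree = 2 := by
  compute_degree!

variable {A : Type*} [Ring A] [Algebra R A] {y : A} {c₀ c₁ : R}

theorem aeval_X_sq_sub_C_mul_X_sub_C (h : y ^ 2 = c₁ • y + algebraMap R A c₀) :
    aeval y (X ^ 2 - C c₁ * X - C c₀) = 0 := by
  simp [h, Algebra.smul_def]

theorem algebraMap_add_smul_mul_self (h : y ^ 2 = c₁ • y + algebraMap R A c₀) (a b : R) :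
    (algebraMap R A a + b • y) * y = algebraMap R A (b * c₀) + (a + b * c₁) • y := by
  rw [add_mul, smul_mul_assoc, ← sq, h, Algebra.smul_def, Algebra.smul_def, Algebra.smul_def]
  simp only [map_mul, map_add]
  noncomm_ring

theorem exists_eq_algebraMap_add_smul_of_mem_adjoin [Nontrivial R]
    (h : y ^ 2 = c₁ • y + algebraMap R A c₀) {z : A} (hz : z ∈ Algebra.adjoin R {y}) :
    ∃ a b : R, algebraMap R A a + b • y = z := by
  obtain ⟨p, rfl⟩ := Algebra.adjoin_mem_exists_aeval R y hz
  have hdeg : (p %ₘ (X ^ 2 - C c₁ * X - C c₀)).natDegree ≤ 1 := by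
    have := natDegree_modByMonic_lt p (monic_X_sq_sub_C_mul_X_sub_C c₀ c₁)
      (ne_of_apply_ne natDegree (by rw [natDegree_X_sq_sub_C_mul_X_sub_C, natDegree_one]; norm_num))
    rw [natDegree_X_sq_sub_C_mul_X_sub_C] at this
    omega
  obtain ⟨b, a, hab⟩ := exists_eq_X_add_C_of_natDegree_le_one hdeg
  refine ⟨a, b, ?_⟩
  rw [← aeval_modByMonic_eq_self_of_root (aeval_X_sq_sub_C_mul_X_sub_C h), hab]
  simp [Algebra.smul_def, add_comm]

end QuadraticPolynomial

section QuadraticElement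

variable {k A : Type*} [Field k] [Ring A] [Nontrivial A] [Algebra k A] {y : A}

theorem algebraMap_add_smul_injective (hy : y ∉ Set.range (algebraMap k A))
    {a b a' b' : k} (h : algebraMap k A a + b • y = algebraMap k A a' + b' • y) :
    a = a' ∧ b = b' := by
  have hb : b = b' := by
    by_contra hb
    refine hy ⟨(a' - a) / (b - b'), ?_⟩
    have : (b - b') • y = algebraMap k A (a' - a) := by
      rw [sub_smul, map_sub]; linear_combination (norm := abel) h
    rw [div_eq_inv_mul, map_mul, ← this, ← Algebra.smul_def, smul_smul,
      inv_mul_cancel₀ (sub_ne_zero.2 hb), one_smul]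
  subst hb
  exact ⟨(algebraMap k A).injective (add_right_cancel h), rfl⟩

theorem minpoly_eq_X_sq_sub_C_mul_X_sub_C {c₀ c₁ : k} (hy : y ∉ Set.range (algebraMap k A))
    (h : y ^ 2 = c₁ • y + algebraMap k A c₀) : minpoly k y = X ^ 2 - C c₁ * X - C c₀ := by
  have hint : IsIntegral k y :=
    ⟨_, monic_X_sq_sub_C_mul_X_sub_C c₀ c₁, aeval_X_sq_sub_C_mul_X_sub_C h⟩
  refine (eq_of_monic_of_dvd_of_natDegree_le (minpoly.monic hint)
    (monic_X_sq_sub_C_mul_X_sub_C c₀ c₁) (minpoly.dvd k y (aeval_X_sq_sub_C_mul_X_sub_C h)) ?_).symm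
  rw [natDegree_X_sq_sub_C_mul_X_sub_C]
  exact (minpoly.two_le_natDegree_iff hint).2 hy

end QuadraticElement

section AdjoinSingleton

variable {k A B : Type*} [Field k] [Ring A] [Algebra k A] [Ring B] [Algebra k B]

noncomputable def aevalAdjoin (y : A) : k[X] →ₐ[k] Algebra.adjoin k {y} :=
  (aeval y).codRestrict _ fun _ ↦ aeval_mem_adjoin_singleton k y

theorem aevalAdjoin_X (y : A) :
    aevalAdjoin (k := k) y X = ⟨y, Algebra.self_mem_adjoin_singleton k y⟩ :=
  Subtype.ext (aeval_X y)

theorem aevalAdjoin_surjective (y : A) : Function.Surjective (aevalAdjoin (k := k) y) := by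
  rintro ⟨z, hz⟩
  obtain ⟨p, rfl⟩ := Algebra.adjoin_mem_exists_aeval k y hz
  exact ⟨p, rfl⟩

theorem ker_aevalAdjoin (y : A) :
    RingHom.ker (aevalAdjoin (k := k) y) = k[X] ∙ minpoly k y := by
  rw [← minpoly.ker_aeval_eq_span_minpoly]
  ext p
  simp only [RingHom.mem_ker, ← Subtype.coe_inj]
  rfl

noncomputable def adjoinSingletonEquivOfMinpolyEq (y : A) (z : B)
    (h : minpoly k y = minpoly k z) : Algebra.adjoin k {y} ≃ₐ[k] Algebra.adjoin k {z} :=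
  (Ideal.quotientKerAlgEquivOfSurjective (aevalAdjoin_surjective y)).symm.trans <|
    (Ideal.quotientEquivAlgOfEq k (by rw [ker_aevalAdjoin, ker_aevalAdjoin, h])).trans
      (Ideal.quotientKerAlgEquivOfSurjective (aevalAdjoin_surjective z))

theorem adjoinSingletonEquivOfMinpolyEq_self {y : A} {z : B} (h : minpoly k y = minpoly k z) :
    adjoinSingletonEquivOfMinpolyEq y z h ⟨y, Algebra.self_mem_adjoin_singleton k y⟩ =
      ⟨z, Algebra.self_mem_adjoin_singleton k z⟩ := by
  rw [← aevalAdjoin_X, ← aevalAdjoin_X]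
  simp [adjoinSingletonEquivOfMinpolyEq]

end AdjoinSingleton

section QuadCompanion

variable {k : Type*} [CommRing k]

def quadCompanion (c₀ c₁ : k) : Matrix (Fin 2) (Fin 2) k := !![0, c₀; 1, c₁]

theorem algebraMap_add_smul_quadCompanion (c₀ c₁ a b : k) :
    algebraMap k (Matrix (Fin 2) (Fin 2) k) a + b • quadCompanion c₀ c₁ =
      !![a, b * c₀; b, a + b * c₁] := by
  ext i j
  fin_cases i <;> fin_cases j <;> simp [quadCompanion, Matrix.algebraMap_matrix_apply]

theorem quadCompanion_sq (c₀ c₁ : k) :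
    quadCompanion c₀ c₁ ^ 2 = c₁ • quadCompanion c₀ c₁ + algebraMap k _ c₀ := by
  rw [add_comm, algebraMap_add_smul_quadCompanion, quadCompanion, sq, Matrix.mul_fin_two]
  simp [mul_comm]

theorem quadCompanion_notMem_range [Nontrivial k] (c₀ c₁ : k) :
    quadCompanion c₀ c₁ ∉ Set.range (algebraMap k (Matrix (Fin 2) (Fin 2) k)) := by
  rintro ⟨a, ha⟩
  simpa [quadCompanion, Matrix.algebraMap_matrix_apply] using congrFun (congrFun ha 1) 0

end QuadCompanion

theorem mem_adjoin_quadCompanion_iff {k A : Type*} [Field k] [Ring A] [Nontrivial A]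
    [Algebra k A] {y : A} {c₀ c₁ : k} (hy : y ∉ Set.range (algebraMap k A))
    (h : y ^ 2 = c₁ • y + algebraMap k A c₀) (M : Matrix (Fin 2) (Fin 2) k) :
    M ∈ Algebra.adjoin k {quadCompanion c₀ c₁} ↔
      ∃ b : A, algebraMap k A (M 0 0) + M 1 0 • y = b ∧
        algebraMap k A (M 0 1) + M 1 1 • y = b * y := by
  constructor
  · intro hM
    obtain ⟨a, b, rfl⟩ := exists_eq_algebraMap_add_smul_of_mem_adjoin (quadCompanion_sq c₀ c₁) hM
    rw [algebraMap_add_smul_quadCompanion]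
    exact ⟨_, rfl, (algebraMap_add_smul_mul_self h a b).symm⟩
  · rintro ⟨b, rfl, hb⟩
    rw [algebraMap_add_smul_mul_self h] at hb
    obtain ⟨h01, h11⟩ := algebraMap_add_smul_injective hy hb
    rw [Matrix.eta_fin_two M, h01, h11, ← algebraMap_add_smul_quadCompanion]
    exact add_mem (Subalgebra.algebraMap_mem _ _)
      (Subalgebra.smul_mem _ (Algebra.self_mem_adjoin_singleton k _) _)

/-- Let `F` be a division ring and `k` a subfield of its centre.
Let `x ∈ F \ k` satisfy `x² = c₁x + c₀` with `c₀, c₁ ∈ k`.  The set `E` of matrices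
`A ∈ M₂(k)` such that there is `b ∈ F` with `a₁₁ + a₂₁x = b` and `a₁₂ + a₂₂x = b·x`
is a `k`-subalgebra of `M₂(k)`, and `a + bx ↦ !![a, b·c₀; b, a + b·c₁]` is a
`k`-algebra isomorphism from `k(x)` onto `E`. -/
theorem stmt0 {k F : Type*} [Field k] [DivisionRing F] [Algebra k F]
    (x : F) (hx : x ∉ Set.range (algebraMap k F)) (c₀ c₁ : k)
    (hx2 : x ^ 2 = c₁ • x + algebraMap k F c₀) :
    ∃ E : Subalgebra k (Matrix (Fin 2) (Fin 2) k),
      (E : Set (Matrix (Fin 2) (Fin 2) k)) =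
        {A | ∃ b : F, algebraMap k F (A 0 0) + (A 1 0) • x = b ∧
                      algebraMap k F (A 0 1) + (A 1 1) • x = b * x} ∧
      ∃ e : Algebra.adjoin k ({x} : Set F) ≃ₐ[k] E,
        ∀ a b : k,
          (e ⟨algebraMap k F a + b • x,
              add_mem (Subalgebra.algebraMap_mem _ a)
                (Subalgebra.smul_mem _ (Algebra.self_mem_adjoin_singleton k x) b)⟩ :
            Matrix (Fin 2) (Fin 2) k) = !![a, b * c₀; b, a + b * c₁] := by
  have hminpoly : minpoly k x = minpoly k (quadCompanion c₀ c₁) := by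
    rw [minpoly_eq_X_sq_sub_C_mul_X_sub_C hx hx2, minpoly_eq_X_sq_sub_C_mul_X_sub_C
      (quadCompanion_notMem_range c₀ c₁) (quadCompanion_sq c₀ c₁)]
  refine ⟨_, Set.ext (mem_adjoin_quadCompanion_iff hx hx2),
    adjoinSingletonEquivOfMinpolyEq x _ hminpoly, fun a b ↦ ?_⟩
  have hgen : (⟨algebraMap k F a + b • x, _⟩ : Algebra.adjoin k {x}) =
      algebraMap k _ a + b • ⟨x, Algebra.self_mem_adjoin_singleton k x⟩ := rfl
  rw [hgen, map_add, AlgEquiv.commutes, map_smul, adjoinSingletonEquivOfMinpolyEq_self]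
  exact algebraMap_add_smul_quadCompanion c₀ c₁ a b
end

section
/- If A ∈ M₃(k) and B ∈ M₂(K) satisfy B·C₂ = C₂·A (viewing A as a matrix over K via the inclusion k ⊆ K), then there exists λ ∈ k with A = λ·I₃ and B = λ·I₂. In particular, the endomorphism ring of the preprojective representation P₂ is reduced to k. -/
/-!
Comparing the first two columns of `B·C₂ = C₂·A` expresses the rows of `B` through `A`; the
third column then yields two relations in `K`. Reducing them with `x² = c₀`, `y² = a₀ + a₁x`
and reading off coordinates in the basis `1, x, y, xy` forces `A = λ·I₃`. Finally `C₂` has a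
right inverse, so `B·C₂ = λ·C₂` gives `B = λ·I₂`.
-/

theorem LinearIndependent.eq_zero_of_fin_four {R M : Type*} [Ring R] [AddCommGroup M]
    [Module R M] {v : Fin 4 → M} (hv : LinearIndependent R v) {a b c d : R}
    (h : a • v 0 + b • v 1 + c • v 2 + d • v 3 = 0) : a = 0 ∧ b = 0 ∧ c = 0 ∧ d = 0 := by
  have hcoeff := Fintype.linearIndependent_iff.mp hv ![a, b, c, d]
    (by simpa [Fin.sum_univ_four] using h)
  exact ⟨hcoeff 0, hcoeff 1, hcoeff 2, hcoeff 3⟩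

theorem Matrix.eq_smul_one_of_mul_eq_smul {R m n : Type*} [CommRing R] [Fintype m]
    [Fintype n] [DecidableEq m] {B : Matrix m m R} {C : Matrix m n R} {S : Matrix n m R}
    (hCS : C * S = 1) {c : R} (h : B * C = c • C) : B = c • 1 := by
  calc B = B * C * S := by rw [Matrix.mul_assoc, hCS, Matrix.mul_one]
    _ = c • 1 := by rw [h, Matrix.smul_mul, hCS]

theorem third_column_of_mul_eq_mul {R : Type*} [CommRing R] {x y : R}
    {A : Matrix (Fin 3) (Fin 3) R} {B : Matrix (Fin 2) (Fin 2) R}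
    (h : B * !![1, 0, x; 0, 1, y] = !![1, 0, x; 0, 1, y] * A) :
    (A 0 0 + x * A 2 0) * x + (A 0 1 + x * A 2 1) * y = A 0 2 + x * A 2 2 ∧
      (A 1 0 + y * A 2 0) * x + (A 1 1 + y * A 2 1) * y = A 1 2 + y * A 2 2 := by
  have entry (i j) := congrFun (congrFun h i) j
  have h00 := entry 0 0
  have h01 := entry 0 1
  have h02 := entry 0 2
  have h10 := entry 1 0
  have h11 := entry 1 1
  have h12 := entry 1 2
  simp only [Matrix.mul_apply, Fin.sum_univ_two, Fin.sum_univ_three, Matrix.of_apply,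
    Matrix.cons_val', Matrix.cons_val_fin_one, Matrix.cons_val, mul_one, mul_zero, one_mul,
    zero_mul, add_zero, zero_add] at h00 h01 h02 h10 h11 h12
  exact ⟨h00 ▸ h01 ▸ h02, h10 ▸ h11 ▸ h12⟩

section QuarticExtension

variable {k K : Type*} [CommRing k] [CommRing K] [Algebra k K] {x y : K}

local notation "ι" => algebraMap k K

theorem coeffs_eq_zero_of_linearIndependent (hbasis : LinearIndependent k ![1, x, y, x * y])
    {a b c d : k} (h : ι a + ι b * x + ι c * y + ι d * (x * y) = 0) :
    a = 0 ∧ b = 0 ∧ c = 0 ∧ d = 0 :=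
  hbasis.eq_zero_of_fin_four (by simpa [Algebra.smul_def] using h)

theorem coeffs_of_row_zero_relation {c₀ : k} (hx : x ^ 2 = ι c₀)
    (hbasis : LinearIndependent k ![1, x, y, x * y]) {a b c d p q : k}
    (h : (ι a + x * ι b) * x + (ι c + x * ι d) * y = ι p + x * ι q) :
    b * c₀ = p ∧ a = q ∧ c = 0 ∧ d = 0 := by
  obtain ⟨h₀, h₁, h₂, h₃⟩ := coeffs_eq_zero_of_linearIndependent (a := b * c₀ - p)
    (b := a - q) (c := c) (d := d) hbasis
    (by simp only [map_sub, map_mul]; linear_combination h - ι b * hx)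
  exact ⟨sub_eq_zero.mp h₀, sub_eq_zero.mp h₁, h₂, h₃⟩

theorem coeffs_of_row_one_relation {a₀ a₁ : k} (hy : y ^ 2 = ι a₀ + ι a₁ * x)
    (hbasis : LinearIndependent k ![1, x, y, x * y]) {a b c d p q : k}
    (h : (ι a + y * ι b) * x + (ι c + y * ι d) * y = ι p + y * ι q) :
    d * a₀ = p ∧ a + d * a₁ = 0 ∧ c = q ∧ b = 0 := by
  obtain ⟨h₀, h₁, h₂, h₃⟩ := coeffs_eq_zero_of_linearIndependent (a := d * a₀ - p)
    (b := a + d * a₁) (c := c - q) (d := b) hbasis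
    (by simp only [map_sub, map_add, map_mul]; linear_combination h - ι d * hy)
  exact ⟨sub_eq_zero.mp h₀, h₁, sub_eq_zero.mp h₂, h₃⟩

end QuarticExtension

theorem stmt1_general {k K : Type*} [Field k] [Field K] [Algebra k K]
    (x y : K) (c₀ a₀ a₁ : k)
    (hx : x ^ 2 = algebraMap k K c₀)
    (hy : y ^ 2 = algebraMap k K a₀ + algebraMap k K a₁ * x)
    (hbasis : LinearIndependent k ![1, x, y, x * y])
    (A : Matrix (Fin 3) (Fin 3) k) (B : Matrix (Fin 2) (Fin 2) K)
    (h : B * !![1, 0, x; 0, 1, y] = !![1, 0, x; 0, 1, y] * A.map (algebraMap k K)) :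
    ∃ lam : k, A = lam • (1 : Matrix (Fin 3) (Fin 3) k) ∧
      B = algebraMap k K lam • (1 : Matrix (Fin 2) (Fin 2) K) := by
  obtain ⟨hrow0, hrow1⟩ := third_column_of_mul_eq_mul h
  obtain ⟨hA02, hA00, hA01, hA21⟩ := coeffs_of_row_zero_relation hx hbasis hrow0
  obtain ⟨hA12, hA10, hA11, hA20⟩ := coeffs_of_row_one_relation hy hbasis hrow1
  have hA : A = A 2 2 • 1 := by
    ext i j
    fin_cases i <;> fin_cases j <;> simp <;> grind
  refine ⟨A 2 2, hA, Matrix.eq_smul_one_of_mul_eq_smul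
    (C := !![1, 0, x; 0, 1, y]) (S := !![1, 0; 0, 1; 0, 0]) ?_ ?_⟩
  · ext i j
    fin_cases i <;> fin_cases j <;> simp
  · rw [h, hA]
    simp [Matrix.map_smul']

/-- Let `K = k(x,y)` with `x² = c₀ ∈ k`, `y² = a₀ + a₁x`, and
`1, x, y, xy` a `k`-basis of `K`.  Let `C₂ = !![1,0,x; 0,1,y]`.  If `A ∈ M₃(k)` and
`B ∈ M₂(K)` satisfy `B·C₂ = C₂·A`, then `A = λ·I₃` and `B = λ·I₂` for some `λ ∈ k`.
In particular `End(P₂) = k`. -/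
theorem stmt1 {k K : Type*} [Field k] [Field K] [Algebra k K]
    (x y : K) (c₀ a₀ a₁ : k)
    (hx : x ^ 2 = algebraMap k K c₀)
    (hy : y ^ 2 = algebraMap k K a₀ + algebraMap k K a₁ * x)
    (hbasis : LinearIndependent k ![1, x, y, x * y])
    (hspan : Submodule.span k {1, x, y, x * y} = ⊤)
    (A : Matrix (Fin 3) (Fin 3) k) (B : Matrix (Fin 2) (Fin 2) K)
    (h : B * !![1, 0, x; 0, 1, y] = !![1, 0, x; 0, 1, y] * A.map (algebraMap k K)) :
    ∃ lam : k, A = lam • (1 : Matrix (Fin 3) (Fin 3) k) ∧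
      B = algebraMap k K lam • (1 : Matrix (Fin 2) (Fin 2) K) :=
  stmt1_general x y c₀ a₀ a₁ hx hy hbasis A B h
end

section
/- If A = (a_ij) ∈ M₂(k) and b ∈ K satisfy a₁₁ + a₂₁y = b and a₁₂ + a₂₂y = b·y, then a₂₁ = 0, a₁₂ = 0, a₁₁ = a₂₂ and b = a₁₁ ∈ k; that is, A is a scalar matrix and b is the corresponding scalar. In particular, if y is a primitive element of a degree-4 field extension K/k, then the endomorphism ring of S_y equals k. -/
/-!
Substituting `b = a₁₁ + a₂₁y` into `a₁₂ + a₂₂y = b·y` gives the `k`-linear relation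
`a₁₂ · 1 + (a₂₂ - a₁₁) · y - a₂₁ · y² = 0`, whose coefficients all vanish since `1, y, y²` are
linearly independent.
-/

theorem LinearIndependent.eq_zero_of_triple {R M : Type*} [Ring R] [AddCommGroup M] [Module R M]
    {x y z : M} (h : LinearIndependent R ![x, y, z]) {s t u : R}
    (hstu : s • x + t • y + u • z = 0) : s = 0 ∧ t = 0 ∧ u = 0 := by
  have hc := Fintype.linearIndependent_iff.mp h ![s, t, u] (by simpa [Fin.sum_univ_three] using hstu)
  exact ⟨hc 0, hc 1, hc 2⟩

/-- Let `K/k` be a field extension and `y ∈ K` with `1, y, y²`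
`k`-linearly independent.  If `A ∈ M₂(k)` and `b ∈ K` satisfy
`a₁₁ + a₂₁y = b` and `a₁₂ + a₂₂y = b·y`, then `a₂₁ = 0`, `a₁₂ = 0`,
`a₁₁ = a₂₂` and `b = a₁₁ ∈ k`. -/
theorem stmt2 {k K : Type*} [Field k] [Field K] [Algebra k K]
    (y : K) (hy : LinearIndependent k ![1, y, y ^ 2])
    (A : Matrix (Fin 2) (Fin 2) k) (b : K)
    (h1 : algebraMap k K (A 0 0) + algebraMap k K (A 1 0) * y = b)
    (h2 : algebraMap k K (A 0 1) + algebraMap k K (A 1 1) * y = b * y) :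
    A 1 0 = 0 ∧ A 0 1 = 0 ∧ A 0 0 = A 1 1 ∧ b = algebraMap k K (A 0 0) := by
  have hrel : A 0 1 • (1 : K) + (A 1 1 - A 0 0) • y + (-A 1 0) • y ^ 2 = 0 := by
    simp only [Algebra.smul_def, map_sub, map_neg]
    subst h1
    linear_combination h2
  obtain ⟨h01, hdiag, h10⟩ := hy.eq_zero_of_triple hrel
  refine ⟨neg_eq_zero.mp h10, h01, (sub_eq_zero.mp hdiag).symm, ?_⟩
  rw [← h1, neg_eq_zero.mp h10, map_zero, zero_mul, add_zero]
end

section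
/- If K/k admits no primitive element (there is no t ∈ K with K = k(t)), then k has characteristic 2, the extension K/k is purely inseparable, and K/k is biquadratic: there exist x, y ∈ K with x² ∈ k, y² ∈ k, [k(x):k] = 2, and K = k(x, y). -/
/-!
Every `t ∈ K` generates a proper subfield, so `[k(t) : k] ≤ 2`. By the primitive element
theorem `K/k` is not separable, and an inseparable irreducible polynomial of degree at most 2
is `X ^ 2 - c` in characteristic 2. Hence every element is separable or has its square in `k`:
`K` is the union of the separable closure and the perfect closure of `k`. A group is never the
union of two proper subgroups, and the separable closure is proper, so `K/k` is purely
inseparable. Finally any `x ∉ k` and `y ∉ k(x)` generate `K`.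
-/

open Polynomial IntermediateField Module

theorem two_eq_zero_and_sq_mem_of_not_isSeparable {k K : Type*} [Field k] [Field K]
    [Algebra k K] {x : K} (hx : IsIntegral k x) (hdeg : (minpoly k x).natDegree ≤ 2)
    (hsep : ¬IsSeparable k x) :
    (2 : k) = 0 ∧ x ^ 2 ∈ (algebraMap k K).range := by
  set f := minpoly k x
  have hmonic : f.Monic := minpoly.monic hx
  have hder : derivative f = 0 := by
    by_contra h
    exact hsep ((separable_iff_derivative_ne_zero (minpoly.irreducible hx)).2 h)
  have hcoeff (n : ℕ) : f.coeff (n + 1) * (n + 1) = 0 := by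
    rw [← coeff_derivative, hder, coeff_zero]
  have hc1 : f.coeff 1 = 0 := by simpa using hcoeff 0
  have hdeg2 : f.natDegree = 2 := by
    have hle : f.natDegree ≤ 2 := hdeg
    have hpos : 0 < f.natDegree := minpoly.natDegree_pos hx
    have h1 : f.natDegree ≠ 1 := fun h =>
      one_ne_zero (hmonic.coeff_natDegree.symm.trans (h ▸ hc1))
    omega
  have hc2 : f.coeff 2 = 1 := hdeg2 ▸ hmonic.coeff_natDegree
  have hf : f = X ^ 2 + C (f.coeff 0) := by
    conv_lhs => rw [f.as_sum_range_C_mul_X_pow, hdeg2]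
    simp [Finset.sum_range_succ, hc1, hc2, add_comm]
  refine ⟨by simpa [hc2, one_add_one_eq_two] using hcoeff 1, -f.coeff 0, ?_⟩
  have h0 : aeval x f = 0 := minpoly.aeval k x
  rw [hf] at h0
  simp only [map_add, map_pow, aeval_X, aeval_C] at h0
  rw [map_neg]
  linear_combination -h0

@[to_additive]
theorem Subgroup.mem_of_forall_mem_or_mem {G : Type*} [Group G] {H K : Subgroup G} {b : G}
    (hb : b ∉ H) (h : ∀ x, x ∈ H ∨ x ∈ K) (x : G) : x ∈ K := by
  have hbK : b ∈ K := (h b).resolve_left hb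
  rcases h x with hxH | hxK
  · have hxbK : x * b ∈ K := (h _).resolve_left fun hxb =>
      hb (by simpa using H.mul_mem (H.inv_mem hxH) hxb)
    simpa using K.mul_mem hxbK (K.inv_mem hbK)
  · exact hxK

theorem isPurelyInseparable_of_forall_isSeparable_or_pow_mem {k K : Type*} [Field k] [Field K]
    [Algebra k K] (q : ℕ) [ExpChar k q] (hK : ¬Algebra.IsSeparable k K)
    (h : ∀ x : K, IsSeparable k x ∨ x ^ q ∈ (algebraMap k K).range) :
    IsPurelyInseparable k K := by
  obtain ⟨b, hb⟩ : ∃ b, b ∉ separableClosure k K := by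
    by_contra! hb
    exact hK ((separableClosure.eq_top_iff k K).1 (eq_top_iff.2 fun x _ => hb x))
  refine (isPurelyInseparable_iff_perfectClosure_eq_top).2 (eq_top_iff.2 fun x _ => ?_)
  refine AddSubgroup.mem_of_forall_mem_or_mem
    (H := (separableClosure k K).toSubfield.toAddSubgroup)
    (K := (perfectClosure k K).toSubfield.toAddSubgroup) hb (fun y => ?_) x
  rcases h y with hy | hy
  · exact .inl (mem_separableClosure_iff.2 hy)
  · exact .inr ((mem_perfectClosure_iff_pow_mem q).2 ⟨1, by simpa using hy⟩)

theorem IntermediateField.two_mul_finrank_le_of_ne_top {k K : Type*} [Field k] [Field K]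
    [Algebra k K] [FiniteDimensional k K] {L : IntermediateField k K} (hL : L ≠ ⊤) :
    2 * finrank k L ≤ finrank k K := by
  have h1 : finrank L K ≠ 1 := fun h => hL (finrank_eq_one_iff_eq_top.1 h)
  have h0 : 0 < finrank L K := finrank_pos
  calc 2 * finrank k L ≤ finrank L K * finrank k L := Nat.mul_le_mul_right _ (by omega)
    _ = finrank k K := by rw [mul_comm, finrank_mul_finrank]

section NoPrimitiveElement

variable {k K : Type*} [Field k] [Field K] [Algebra k K] [FiniteDimensional k K]

theorem natDegree_minpoly_le_two (hdeg : finrank k K = 4) (hnoprim : ¬∃ t : K, k⟮t⟯ = ⊤)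
    (x : K) : (minpoly k x).natDegree ≤ 2 := by
  have := two_mul_finrank_le_of_ne_top fun h => hnoprim ⟨x, h⟩
  rw [adjoin.finrank (IsIntegral.of_finite k x)] at this
  omega

theorem exists_finrank_adjoin_eq_two_and_adjoin_pair_eq_top (hdeg : finrank k K = 4)
    (hnoprim : ¬∃ t : K, k⟮t⟯ = ⊤) :
    ∃ x y : K, finrank k k⟮x⟯ = 2 ∧ adjoin k ({x, y} : Set K) = ⊤ := by
  obtain ⟨x, hx⟩ : ∃ x : K, x ∉ (⊥ : IntermediateField k K) := by
    by_contra! h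
    have := (bot_eq_top_iff_finrank_eq_one (F := k) (E := K)).1 (eq_top_iff.2 fun x _ => h x)
    omega
  have hxtop : k⟮x⟯ ≠ ⊤ := fun h => hnoprim ⟨x, h⟩
  have hx2 : finrank k k⟮x⟯ = 2 := by
    have hle := two_mul_finrank_le_of_ne_top hxtop
    have h1 : finrank k k⟮x⟯ ≠ 1 := fun h => hx (finrank_adjoin_simple_eq_one_iff.1 h)
    have h0 : 0 < finrank k k⟮x⟯ := finrank_pos
    omega
  obtain ⟨y, hy⟩ : ∃ y : K, y ∉ k⟮x⟯ := by
    by_contra! h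
    exact hxtop (eq_top_iff.2 fun y _ => h y)
  refine ⟨x, y, hx2, by_contra fun hxy => hy ?_⟩
  have hle : k⟮x⟯ ≤ adjoin k {x, y} := adjoin.mono k _ _ (by simp)
  have heq := eq_of_le_of_finrank_le hle (by have := two_mul_finrank_le_of_ne_top hxy; omega)
  exact heq ▸ subset_adjoin k _ (by simp)

end NoPrimitiveElement

/-- Let `K/k` be a field extension of degree 4.  If `K/k` admits no
primitive element, then `char k = 2`, `K/k` is purely inseparable, and `K/k` is
biquadratic: there are `x, y ∈ K` with `x², y² ∈ k`, `[k(x):k] = 2` and `K = k(x,y)`. -/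
theorem stmt3 {k K : Type*} [Field k] [Field K] [Algebra k K]
    (hdeg : Module.finrank k K = 4)
    (hnoprim : ¬ ∃ t : K, IntermediateField.adjoin k {t} = ⊤) :
    ringChar k = 2 ∧ IsPurelyInseparable k K ∧
      ∃ x y : K, x ^ 2 ∈ Set.range (algebraMap k K) ∧ y ^ 2 ∈ Set.range (algebraMap k K) ∧
        Module.finrank k (IntermediateField.adjoin k ({x} : Set K)) = 2 ∧
        IntermediateField.adjoin k ({x, y} : Set K) = ⊤ := by
  have : FiniteDimensional k K := .of_finrank_pos (by omega)
  have hsep_or_sq (x : K) : IsSeparable k x ∨ (2 : k) = 0 ∧ x ^ 2 ∈ (algebraMap k K).range :=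
    or_iff_not_imp_left.2 <| two_eq_zero_and_sq_mem_of_not_isSeparable (.of_finite k x)
      (natDegree_minpoly_le_two hdeg hnoprim x)
  have hK : ¬Algebra.IsSeparable k K := fun _ => hnoprim (Field.exists_primitive_element k K)
  obtain ⟨x₀, hx₀⟩ : ∃ x : K, ¬IsSeparable k x := by
    by_contra! h
    exact hK ⟨h⟩
  have : CharP k 2 := (CharP.charP_iff_prime_eq_zero Nat.prime_two).2 <|
    by exact_mod_cast ((hsep_or_sq x₀).resolve_left hx₀).1
  have hpi : IsPurelyInseparable k K := isPurelyInseparable_of_forall_isSeparable_or_pow_mem 2 hK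
    fun x => (hsep_or_sq x).imp_right And.right
  have hsq (x : K) : x ^ 2 ∈ Set.range (algebraMap k K) := by
    rcases hsep_or_sq x with hx | ⟨-, hx⟩
    · obtain ⟨c, rfl⟩ := IsPurelyInseparable.inseparable k x hx
      exact ⟨c ^ 2, map_pow _ _ _⟩
    · exact hx
  obtain ⟨x, y, hx, hxy⟩ := exists_finrank_adjoin_eq_two_and_adjoin_pair_eq_top hdeg hnoprim
  exact ⟨ringChar.eq k 2, hpi, x, y, hsq x, hsq y, hx, hxy⟩
end

section
/- The extension K/k admits a primitive element: there exists t ∈ K with K = k(t). -/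
/-!
Since `K/L` is purely inseparable of degree 2, the characteristic is 2 and `b ^ 2 ∈ L` for every
`b : K`. An element `x ∉ L` with `x ^ 2 ∈ L \ k` generates `K`: the degrees `[L:k]` and `[K:L]`
are prime, so `k⟮x ^ 2⟯ = L`, and then `L < k⟮x⟯` forces `k⟮x⟯ = K`. Take `b ∉ L`. If `b ^ 2 ∉ k`
then `x = b` works; otherwise take `a ∈ L \ k` and `x = a + b`, whose square `a ^ 2 + b ^ 2` is
not in `k` because `a` is separable, whence `k⟮a ^ 2⟯ = k⟮a⟯ ≠ k`.
-/

open IntermediateField Module Polynomial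

namespace IsPurelyInseparable

variable {F E : Type*} [Field F] [Field E] [Algebra F E] [IsPurelyInseparable F E] {p : ℕ}

theorem expChar_of_finrank_prime (hp : p.Prime) (h : finrank F E = p) : ExpChar F p := by
  have : FiniteDimensional F E := .of_finrank_pos (h ▸ hp.pos)
  obtain ⟨n, hn⟩ := finrank_eq_pow F E (ringExpChar F)
  obtain ⟨hq, -⟩ := hp.pow_eq_iff.mp (hn ▸ h)
  exact hq ▸ ringExpChar.expChar F

theorem pow_mem_range_of_finrank_prime (hp : p.Prime) (h : finrank F E = p) (x : E) :
    x ^ p ∈ (algebraMap F E).range := by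
  have := expChar_of_finrank_prime hp h
  have : FiniteDimensional F E := .of_finrank_pos (h ▸ hp.pos)
  obtain ⟨n, y, hmin⟩ := minpoly_eq_X_pow_sub_C F p x
  have hx : x ^ p ^ n = algebraMap F E y := by
    simpa [hmin, sub_eq_zero] using minpoly.aeval F x
  have hn : n ≤ 1 := by
    have := minpoly.natDegree_le (A := F) x
    rw [hmin, natDegree_X_pow_sub_C, h] at this
    exact (Nat.pow_le_pow_iff_right hp.one_lt).mp (by simpa using this)
  have hp_eq : p = p ^ n * p ^ (1 - n) := by rw [← pow_add, Nat.add_sub_cancel' hn, pow_one]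
  exact ⟨y ^ p ^ (1 - n), by rw [map_pow, ← hx, ← pow_mul, ← hp_eq]⟩

end IsPurelyInseparable

namespace IntermediateField

variable {k K : Type*} [Field k] [Field K] [Algebra k K]

theorem eq_of_lt_of_le_of_relfinrank_prime {A B C : IntermediateField k K} (hAB : A < B)
    (hBC : B ≤ C) (hp : (relfinrank A C).Prime) : B = C := by
  have hmul := relfinrank_mul_relfinrank hAB.le hBC
  have hAB' : relfinrank A B ≠ 1 := fun h ↦ hAB.not_ge (relfinrank_eq_one_iff.mp h)
  have hBC' : relfinrank B C = 1 :=
    ((Nat.prime_mul_iff.mp (hmul ▸ hp)).resolve_right fun h ↦ hAB' h.2).2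
  exact le_antisymm hBC (relfinrank_eq_one_iff.mp hBC')

theorem adjoin_simple_eq_top_of_pow_mem (L : IntermediateField k K) (hL : (finrank k L).Prime)
    (hK : (finrank L K).Prime) {x : K} {n : ℕ} (hxL : x ∉ L) (hxnL : x ^ n ∈ L)
    (hxn : x ^ n ∉ (⊥ : IntermediateField k K)) : k⟮x⟯ = ⊤ := by
  have hL_eq : k⟮x ^ n⟯ = L := by
    refine eq_of_lt_of_le_of_relfinrank_prime (bot_lt_iff_ne_bot.mpr ?_) ?_
      (by rwa [relfinrank_bot_left])
    · rwa [Ne, adjoin_simple_eq_bot_iff]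
    · rwa [adjoin_simple_le_iff]
  have hLx : L ≤ k⟮x⟯ :=
    hL_eq ▸ adjoin_simple_le_iff.mpr (pow_mem (mem_adjoin_simple_self k x) n)
  exact eq_of_lt_of_le_of_relfinrank_prime
    (lt_of_le_of_ne hLx fun h ↦ hxL (h ▸ mem_adjoin_simple_self k x)) le_top
    (by rwa [relfinrank_top_right])

theorem pow_mem_bot_iff_of_isSeparable {a : K} (ha : IsSeparable k a) (q : ℕ) [ExpChar k q] :
    a ^ q ∈ (⊥ : IntermediateField k K) ↔ a ∈ (⊥ : IntermediateField k K) := by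
  rw [← adjoin_simple_eq_bot_iff, ← adjoin_simple_eq_bot_iff,
    adjoin_simple_eq_adjoin_pow_expChar_of_isSeparable k K ha q]

end IntermediateField

/-- Let `K/k` be a degree-4 field extension and `L` an intermediate
field with `[L:k] = 2` such that `L/k` is separable and `K/L` is purely inseparable.
Then `K/k` admits a primitive element. -/
theorem stmt5 {k K : Type*} [Field k] [Field K] [Algebra k K]
    (hdeg : Module.finrank k K = 4) (L : IntermediateField k K)
    (hL : Module.finrank k L = 2)
    (hsep : Algebra.IsSeparable k L)
    (hinsep : IsPurelyInseparable L K) :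
    ∃ t : K, IntermediateField.adjoin k ({t} : Set K) = ⊤ := by
  have : FiniteDimensional k K := .of_finrank_pos (by omega)
  have hLK : finrank L K = 2 := by
    have := finrank_mul_finrank k L K
    rw [hL, hdeg] at this
    omega
  have : ExpChar L 2 := IsPurelyInseparable.expChar_of_finrank_prime Nat.prime_two hLK
  have : ExpChar k 2 := (algebraMap k L).expChar (algebraMap k L).injective 2
  have : ExpChar K 2 := expChar_of_injective_algebraMap (algebraMap L K).injective 2
  have hsq_mem (x : K) : x ^ 2 ∈ L := by
    obtain ⟨y, hy⟩ := IsPurelyInseparable.pow_mem_range_of_finrank_prime Nat.prime_two hLK x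
    exact hy ▸ y.2
  have hLp : (finrank k L).Prime := hL ▸ Nat.prime_two
  have hLKp : (finrank L K).Prime := hLK ▸ Nat.prime_two
  obtain ⟨b, -, hbL⟩ := SetLike.exists_of_lt (lt_top_iff_ne_top.mpr
    fun h : L = ⊤ ↦ by rw [← finrank_eq_one_iff_eq_top] at h; omega)
  by_cases hb : b ^ 2 ∈ (⊥ : IntermediateField k K)
  · obtain ⟨a, haL, ha⟩ := SetLike.exists_of_lt (bot_lt_iff_ne_bot.mpr
      fun h : L = ⊥ ↦ by rw [← IntermediateField.finrank_eq_one_iff] at h; omega)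
    have ha_sep : IsSeparable k a := isSeparable_of_mem_isSeparable k K haL
    refine ⟨a + b, adjoin_simple_eq_top_of_pow_mem L hLp hLKp (fun h ↦ hbL ?_) (hsq_mem _) ?_⟩
    · simpa using L.sub_mem h haL
    · rw [add_pow_expChar]
      intro h
      exact ha ((pow_mem_bot_iff_of_isSeparable ha_sep 2).mp (by simpa using sub_mem h hb))
  · exact ⟨b, adjoin_simple_eq_top_of_pow_mem L hLp hLKp hbL (hsq_mem b) hb⟩
end

section
/- Every anisotropic quadratic form Q on k³ is similar to a form −aX² − bY² + abZ²: there exist a, b, λ ∈ kˣ such that the scaled form λ·Q is isometric (equivalent) to the diagonal quadratic form (X, Y, Z) ↦ −aX² − bY² + abZ². -/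
/-!
Diagonalize `Q` in an orthogonal basis: anisotropy makes the form nondegenerate, so all three
weights `c₀, c₁, c₂` are units. Scaling by `λ = c₂ / (c₀ c₁)` turns them into
`λc₀ = c₂ / c₁`, `λc₁ = c₂ / c₀` and `λc₂ = (c₂ / c₁)(c₂ / c₀)`, which is `−a, −b, ab` for
`a = −c₂ / c₁` and `b = −c₂ / c₀`.
-/

namespace QuadraticMap

theorem Equivalent.smul {R S M₁ M₂ N : Type*} [CommSemiring R] [AddCommMonoid M₁]
    [AddCommMonoid M₂] [AddCommMonoid N] [Module R M₁] [Module R M₂] [Module R N] [Monoid S]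
    [DistribMulAction S N] [SMulCommClass S R N] {Q₁ : QuadraticMap R M₁ N}
    {Q₂ : QuadraticMap R M₂ N} (h : Q₁.Equivalent Q₂) (c : S) : (c • Q₁).Equivalent (c • Q₂) :=
  let ⟨f⟩ := h
  ⟨{ f.toLinearEquiv with map_app' := fun m => by simp [f.map_app m] }⟩

section WeightedSumSquares

variable {ι ι' R : Type*} [Fintype ι] [Fintype ι'] [CommSemiring R]

theorem smul_weightedSumSquares (c : R) (w : ι → R) :
    c • weightedSumSquares R w = weightedSumSquares R (c • w) := by
  ext x
  simp only [smul_apply, weightedSumSquares_apply, Finset.mul_sum, Pi.smul_apply, smul_eq_mul,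
    mul_assoc]

theorem equivalent_weightedSumSquares_comp (w : ι → R) (e : ι' ≃ ι) :
    (weightedSumSquares R w).Equivalent (weightedSumSquares R (w ∘ e)) :=
  ⟨{ LinearEquiv.funCongrLeft R R e with
    map_app' := fun x => by
      simp only [weightedSumSquares_apply]
      exact e.sum_comp fun i => w i • (x i * x i) }⟩

end WeightedSumSquares

theorem Anisotropic.exists_equivalent_weightedSumSquares_units {K V ι : Type*} [Field K]
    [Invertible (2 : K)] [AddCommGroup V] [Module K V] [FiniteDimensional K V] [Fintype ι]
    {Q : QuadraticForm K V} (hQ : Q.Anisotropic) (hι : Fintype.card ι = Module.finrank K V) :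
    ∃ w : ι → Kˣ, Q.Equivalent (weightedSumSquares K fun i => (w i : K)) := by
  obtain ⟨w, hw⟩ :=
    Q.equivalent_weightedSumSquares_units_of_nondegenerate' (separatingLeft_of_anisotropic Q hQ)
  exact ⟨w ∘ Fintype.equivFinOfCardEq hι,
    hw.trans (equivalent_weightedSumSquares_comp _ (Fintype.equivFinOfCardEq hι))⟩

end QuadraticMap

/-- Let `k` be a field of characteristic `≠ 2`.  Every anisotropic
quadratic form `Q` on `k³` is similar to a form `−aX² − bY² + abZ²`: there are
units `a, b, λ` of `k` such that `λ·Q` is equivalent (isometric) to the diagonal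
form with weights `(−a, −b, ab)`. -/
theorem stmt11 {k : Type*} [Field k] (hchar : ringChar k ≠ 2)
    (Q : QuadraticForm k (Fin 3 → k)) (hQ : Q.Anisotropic) :
    ∃ a b lam : kˣ,
      QuadraticMap.Equivalent ((lam : k) • Q)
        (QuadraticMap.weightedSumSquares k ![-(a : k), -(b : k), (a : k) * (b : k)]) := by
  have : Invertible (2 : k) := invertibleOfNonzero (Ring.two_ne_zero hchar)
  obtain ⟨c, hc⟩ := hQ.exists_equivalent_weightedSumSquares_units (ι := Fin 3) (by simp)
  refine ⟨-(c 2 / c 1), -(c 2 / c 0), c 2 / (c 0 * c 1), ?_⟩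
  have hweights : (((c 2 / (c 0 * c 1) : kˣ) : k) • fun i => (c i : k)) =
      ![-((-(c 2 / c 1) : kˣ) : k), -((-(c 2 / c 0) : kˣ) : k),
        ((-(c 2 / c 1) : kˣ) : k) * ((-(c 2 / c 0) : kˣ) : k)] := by
    funext i
    fin_cases i <;> simp <;> field_simp
  rw [← hweights, ← QuadraticMap.smul_weightedSumSquares]
  exact hc.smul _
end

section
/- If F is not commutative, then the center of F is exactly k, and F is a quaternion algebra over k: there exist a, b ∈ kˣ and a k-algebra isomorphism F ≅ (a, b / k). -/
/-!
Pick `s, t` with `st ≠ ts`. The subalgebra `k[s]` is a commutative finite-dimensional domain,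
hence a field, so by the tower law `[k[s] : k]` divides `4`; it is neither `1` nor `4`
(as `s ∉ k` and `F` is not commutative), so `s` satisfies a quadratic equation and, completing the
square (char `≠ 2`), `e = 2s - c` satisfies `e² = a ∈ k` and still `et ≠ te`. Since `e²` is
central, `j = te - et` anticommutes with `e`. Conjugation by `e` shows that `1, e, j, ej` are
linearly independent, hence a basis, and that only scalars commute with both `e` and `j`; in
particular `j² ∈ k` and the centre is `k`.
-/

open Module
open scoped IsMulCommutative Algebra

section

variable {k F : Type*} [Field k] [DivisionRing F] [Algebra k F]

theorem eq_zero_of_eq_neg_of_two_ne_zero {M : Type*} [AddCommGroup M] [Module k M]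
    (h2 : (2 : k) ≠ 0) {x : M} (h : x = -x) : x = 0 :=
  (smul_eq_zero.mp (by rw [two_smul, ← eq_neg_iff_add_eq_zero, ← h])).resolve_left h2

theorem ne_zero_of_notMem_range {e : F} (he : e ∉ Set.range (algebraMap k F)) : e ≠ 0 :=
  fun h => he ⟨0, by rw [h, map_zero]⟩

theorem linearIndependent_one_of_notMem_range {s : F} (hs : s ∉ Set.range (algebraMap k F)) :
    LinearIndependent k ![1, s] := by
  refine LinearIndependent.pair_iff.mpr fun α β h => ?_
  obtain rfl | hβ := eq_or_ne β 0
  · simpa using h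
  · refine absurd ⟨-(β⁻¹ * α), ?_⟩ hs
    calc algebraMap k F (-(β⁻¹ * α)) = β⁻¹ • -(α • 1) := by
          rw [Algebra.algebraMap_eq_smul_one, smul_neg, smul_smul, neg_smul]
      _ = β⁻¹ • (β • s) := by rw [eq_neg_of_add_eq_zero_right h]
      _ = s := inv_smul_smul₀ hβ s

theorem finrank_adjoin_singleton_dvd [FiniteDimensional k F] (s : F) :
    finrank k k[s] ∣ finrank k F := by
  let _ : Field k[s] := (isField_of_isIntegral_of_isField' (R := k) (Field.toIsField k)).toField
  exact Module.finrank_dvd_finrank_right k k[s] F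

theorem exists_mul_self_eq_smul_add_algebraMap (hdim : finrank k F = 4) {s t : F}
    (hst : ¬Commute s t) : ∃ c d : k, s * s = c • s + algebraMap k F d := by
  have : FiniteDimensional k F := .of_finrank_eq_succ hdim
  have hs : s ∉ Set.range (algebraMap k F) :=
    fun ⟨r, hr⟩ => hst (hr ▸ Algebra.commute_algebraMap_left r t :)
  have hdvd : finrank k k[s] ∣ 4 := hdim ▸ finrank_adjoin_singleton_dvd s
  have hne_one : finrank k k[s] ≠ 1 := by
    rw [Ne, Subalgebra.finrank_eq_one_iff]
    rintro hbot
    exact hs (Algebra.mem_bot.mp (hbot ▸ Algebra.self_mem_adjoin_singleton k s))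
  have hne_four : finrank k k[s] ≠ 4 := by
    intro h4
    have htop : k[s] = ⊤ := by
      rw [← Algebra.toSubmodule_eq_top]
      exact Submodule.eq_top_of_finrank_eq (by rw [Subalgebra.finrank_toSubmodule, h4, hdim])
    exact hst <| by
      simpa [commute_iff_eq] using mul_comm (⟨s, htop ▸ trivial⟩ : k[s]) ⟨t, htop ▸ trivial⟩
  have htwo : finrank k k[s] = 2 := by
    have := Nat.le_of_dvd (by norm_num) hdvd
    interval_cases h : finrank k k[s] <;> omega
  have hli := linearIndependent_one_of_notMem_range hs
  have hspan : Submodule.span k (Set.range ![1, s]) = Subalgebra.toSubmodule k[s] := by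
    apply Submodule.eq_of_le_of_finrank_eq
    · rw [Submodule.span_le, Matrix.range_cons, Matrix.range_cons, Matrix.range_empty]
      simp [Set.insert_subset_iff, Algebra.self_mem_adjoin_singleton]
    · rw [finrank_span_eq_card hli, Subalgebra.finrank_toSubmodule, htwo, Fintype.card_fin]
  have hmem : s * s ∈ Submodule.span k (Set.range ![1, s]) := by
    rw [hspan, Subalgebra.mem_toSubmodule]
    exact mul_mem (Algebra.self_mem_adjoin_singleton k s) (Algebra.self_mem_adjoin_singleton k s)
  obtain ⟨c, hc⟩ := (Submodule.mem_span_range_iff_exists_fun k).mp hmem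
  refine ⟨c 1, c 0, ?_⟩
  simp [← hc, Fin.sum_univ_two, Algebra.algebraMap_eq_smul_one, add_comm]

theorem mul_self_two_smul_sub_eq {A : Type*} [Ring A] [Algebra k A] {s : A} {c d : k}
    (h : s * s = c • s + algebraMap k A d) :
    ((2 : k) • s - algebraMap k A c) * ((2 : k) • s - algebraMap k A c) =
      algebraMap k A (c ^ 2 + 4 * d) := by
  set a := algebraMap k A c
  rw [Algebra.smul_def] at h
  calc ((2 : k) • s - a) * ((2 : k) • s - a) = 4 * (s * s) - 2 * (a * s) - 2 * (s * a) + a * a := by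
        rw [two_smul]
        noncomm_ring
    _ = 4 * (a * s + algebraMap k A d) - 2 * (a * s) - 2 * (a * s) + a * a := by
        rw [h, Algebra.commutes c s]
    _ = algebraMap k A (c ^ 2 + 4 * d) := by
        simp only [a, map_add, map_mul, map_pow, map_ofNat]
        noncomm_ring

theorem exists_mul_self_eq_algebraMap_of_not_commute (h2 : (2 : k) ≠ 0)
    (hdim : finrank k F = 4) {s t : F} (hst : ¬Commute s t) :
    ∃ (e : F) (a : k), e * e = algebraMap k F a ∧ ¬Commute e t := by
  obtain ⟨c, d, hsq⟩ := exists_mul_self_eq_smul_add_algebraMap hdim hst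
  refine ⟨(2 : k) • s - algebraMap k F c, _, mul_self_two_smul_sub_eq hsq, fun h => hst ?_⟩
  simpa [inv_smul_smul₀ h2] using
    (h.add_left (Algebra.commute_algebraMap_left c t)).smul_left (2 : k)⁻¹

theorem commutator_mul_eq_neg_mul_commutator {A : Type*} [Ring A] {e t : A}
    (h : Commute (e * e) t) : (t * e - e * t) * e = -(e * (t * e - e * t)) := by
  rw [sub_mul, mul_sub, mul_assoc t, ← h.eq]
  noncomm_ring

theorem commute_mul_self_of_mul_eq_neg {A : Type*} [Ring A] {e j : A} (hje : j * e = -(e * j)) :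
    Commute e (j * j) := by
  have hej : e * j = -(j * e) := by rw [hje, neg_neg]
  calc e * (j * j) = e * j * j := (mul_assoc _ _ _).symm
    _ = -(j * e * j) := by rw [hej, neg_mul]
    _ = j * (j * e) := by rw [mul_assoc, hej, mul_neg, neg_neg]
    _ = j * j * e := (mul_assoc _ _ _).symm

theorem QuaternionAlgebra.Basis.bijective_liftHom {A : Type*} [Ring A] [Algebra k A]
    {c₁ c₂ c₃ : k} (q : QuaternionAlgebra.Basis A c₁ c₂ c₃) (hA : finrank k A = 4)
    (hspan : ∀ z : A, ∃ α β γ δ : k, z = algebraMap k A α + β • q.i + γ • q.j + δ • q.k) :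
    Function.Bijective q.liftHom := by
  have : FiniteDimensional k A := .of_finrank_eq_succ hA
  have hsurj : Function.Surjective q.liftHom := fun z => by
    obtain ⟨α, β, γ, δ, hz⟩ := hspan z
    exact ⟨⟨α, β, γ, δ⟩, hz.symm⟩
  refine ⟨?_, hsurj⟩
  exact (LinearMap.injective_iff_surjective_of_finrank_eq_finrank
    (by rw [QuaternionAlgebra.finrank_eq_four, hA]) (f := q.liftHom.toLinearMap)).mpr hsurj

section AnticommutingPair

variable {e j : F} (h2 : (2 : k) ≠ 0) (he : e ∉ Set.range (algebraMap k F)) (hj : j ≠ 0)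
  (hje : j * e = -(e * j))
include h2 he hj hje

theorem eq_zero_and_eq_zero_of_commute_sum {α β γ δ : k}
    (hcomm : Commute e (algebraMap k F α + β • e + γ • j + δ • (e * j))) : γ = 0 ∧ δ = 0 := by
  set q := algebraMap k F γ + δ • e
  have hq : Commute e q :=
    (Algebra.commute_algebraMap_right γ e).add_right ((Commute.refl e).smul_right δ)
  have hp : Commute e (algebraMap k F α + β • e) :=
    (Algebra.commute_algebraMap_right α e).add_right ((Commute.refl e).smul_right β)
  have hqj : Commute e (q * j) := by
    have hsplit : algebraMap k F α + β • e + γ • j + δ • (e * j) =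
        algebraMap k F α + β • e + q * j := by
      simp only [q, add_mul, Algebra.smul_def, mul_assoc, add_assoc]
    have h := hcomm.sub_right hp
    rwa [hsplit, add_sub_cancel_left] at h
  have hq0 : q * (e * j) = 0 := by
    refine eq_zero_of_eq_neg_of_two_ne_zero h2 ?_
    calc q * (e * j) = e * (q * j) := by rw [← mul_assoc, ← hq.eq, mul_assoc]
      _ = q * j * e := hqj.eq
      _ = -(q * (e * j)) := by rw [mul_assoc, hje, mul_neg]
  have : γ • (1 : F) + δ • e = 0 := by
    rw [← Algebra.algebraMap_eq_smul_one]
    exact (mul_eq_zero.mp hq0).resolve_right (mul_ne_zero (ne_zero_of_notMem_range he) hj)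
  have hli : LinearIndependent k ![(1 : F), e] := linearIndependent_one_of_notMem_range he
  exact LinearIndependent.pair_iff.mp hli γ δ this

theorem eq_zero_of_commute_algebraMap_add_smul {α β : k}
    (hcomm : Commute j (algebraMap k F α + β • e)) : β = 0 := by
  have hβe : Commute j (β • e) := by
    have h := hcomm.sub_right (Algebra.commute_algebraMap_right α j)
    rwa [add_sub_cancel_left] at h
  have h0 : β • (j * e) = 0 := by
    refine eq_zero_of_eq_neg_of_two_ne_zero h2 ?_
    calc β • (j * e) = β • e * j := by rw [← mul_smul_comm, hβe.eq]
      _ = -(β • (j * e)) := by rw [smul_mul_assoc, hje, smul_neg, neg_neg]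
  exact (smul_eq_zero.mp h0).resolve_right (mul_ne_zero hj (ne_zero_of_notMem_range he))

theorem linearIndependent_one_e_j_ej : LinearIndependent k ![1, e, j, e * j] := by
  rw [Fintype.linearIndependent_iff]
  intro g hg
  simp only [Fin.sum_univ_four, Matrix.cons_val_zero, Matrix.cons_val_one, Matrix.cons_val_two,
    Matrix.cons_val_three, Matrix.head_cons, Matrix.tail_cons] at hg
  rw [← Algebra.algebraMap_eq_smul_one] at hg
  obtain ⟨hγ, hδ⟩ := eq_zero_and_eq_zero_of_commute_sum h2 he hj hje (hg ▸ Commute.zero_right e)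
  rw [hγ, hδ, zero_smul, zero_smul, add_zero, add_zero, Algebra.algebraMap_eq_smul_one] at hg
  have hli : LinearIndependent k ![(1 : F), e] := linearIndependent_one_of_notMem_range he
  obtain ⟨hα, hβ⟩ := LinearIndependent.pair_iff.mp hli _ _ hg
  intro i
  fin_cases i <;> assumption

variable (hdim : finrank k F = 4)
include hdim

theorem exists_eq_algebraMap_add_smul (z : F) :
    ∃ α β γ δ : k, z = algebraMap k F α + β • e + γ • j + δ • (e * j) := by
  have hli : LinearIndependent k ![1, e, j, e * j] := linearIndependent_one_e_j_ej h2 he hj hje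
  let b := basisOfLinearIndependentOfCardEqFinrank hli (by rw [Fintype.card_fin, hdim])
  refine ⟨b.repr z 0, b.repr z 1, b.repr z 2, b.repr z 3, ?_⟩
  conv_lhs => rw [← b.sum_repr z]
  simp [b, Fin.sum_univ_four, Algebra.algebraMap_eq_smul_one]

theorem mem_range_of_commute_of_commute {z : F} (hze : Commute e z) (hzj : Commute j z) :
    z ∈ Set.range (algebraMap k F) := by
  obtain ⟨α, β, γ, δ, rfl⟩ := exists_eq_algebraMap_add_smul h2 he hj hje hdim z
  obtain ⟨rfl, rfl⟩ := eq_zero_and_eq_zero_of_commute_sum h2 he hj hje hze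
  rw [zero_smul, zero_smul, add_zero, add_zero] at hzj ⊢
  obtain rfl := eq_zero_of_commute_algebraMap_add_smul h2 he hj hje hzj
  exact ⟨α, by rw [zero_smul, add_zero]⟩

theorem center_eq_range : Subring.center F = (algebraMap k F).range := by
  refine le_antisymm (fun z hz => ?_) ?_
  · rw [Subring.mem_center_iff] at hz
    exact mem_range_of_commute_of_commute h2 he hj hje hdim (hz e) (hz j)
  · rintro _ ⟨r, rfl⟩
    exact Subring.mem_center_iff.mpr fun z => (Algebra.commutes r z).symm

theorem exists_nonempty_algEquiv_quaternionAlgebra {a : k} (he2 : e * e = algebraMap k F a) :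
    ∃ a b : kˣ, Nonempty (F ≃ₐ[k] QuaternionAlgebra k (a : k) 0 (b : k)) := by
  obtain ⟨b, hb⟩ := mem_range_of_commute_of_commute h2 he hj hje hdim
    (commute_mul_self_of_mul_eq_neg hje) ((Commute.refl j).mul_right (Commute.refl j))
  have ha0 : a ≠ 0 := fun h => ne_zero_of_notMem_range he (by simpa [h] using he2)
  have hb0 : b ≠ 0 := fun h => hj (by simpa [h] using hb.symm)
  let q : QuaternionAlgebra.Basis F a 0 b :=
    { i := e, j := j, k := e * j
      i_mul_i := by rw [he2, zero_smul, add_zero, Algebra.algebraMap_eq_smul_one]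
      j_mul_j := by rw [← hb, Algebra.algebraMap_eq_smul_one]
      i_mul_j := rfl
      j_mul_i := by rw [zero_smul, zero_sub, hje] }
  exact ⟨Units.mk0 a ha0, Units.mk0 b hb0, ⟨(AlgEquiv.ofBijective q.liftHom
    (q.bijective_liftHom hdim (exists_eq_algebraMap_add_smul h2 he hj hje hdim))).symm⟩⟩

end AnticommutingPair

end

/-- Let `k` be a field of characteristic `≠ 2` and `F` a division ring
with `k` in its centre and `dim_k F = 4`.  If `F` is not commutative, then the centre
of `F` is exactly `k` and `F` is a quaternion algebra `(a,b/k)` for some `a, b ∈ kˣ`. -/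
theorem stmt12 {k : Type*} [Field k] (hchar : ringChar k ≠ 2)
    (F : Type*) [DivisionRing F] [Algebra k F]
    (hdim : Module.finrank k F = 4)
    (hnc : ¬ ∀ s t : F, s * t = t * s) :
    Subring.center F = (algebraMap k F).range ∧
      ∃ a b : kˣ, Nonempty (F ≃ₐ[k] QuaternionAlgebra k (a : k) 0 (b : k)) := by
  have h2 : (2 : k) ≠ 0 := Ring.two_ne_zero hchar
  obtain ⟨s, t, hst⟩ : ∃ s t : F, ¬Commute s t := by simpa [commute_iff_eq] using hnc
  obtain ⟨e, a, he2, het⟩ := exists_mul_self_eq_algebraMap_of_not_commute h2 hdim hst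
  have he : e ∉ Set.range (algebraMap k F) :=
    fun ⟨r, hr⟩ => het (hr ▸ Algebra.commute_algebraMap_left r t :)
  have hj : t * e - e * t ≠ 0 := sub_ne_zero.mpr fun h => het h.symm
  have hje := commutator_mul_eq_neg_mul_commutator (he2 ▸ Algebra.commute_algebraMap_left a t)
  exact ⟨center_eq_range h2 he hj hje hdim,
    exists_nonempty_algEquiv_quaternionAlgebra h2 he hj hje hdim he2⟩
end
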